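/- arXiv:1710.10551 — 5 statements merged into one kernel-verified Lean document; each statement's English description precedes it below -/
import Mathlib

section
/- For a centered sub-Gaussian random variable X with parameter ν² and any integer k ≥ 1, the k-th absolute moment satisfies (E|X|^k)^{1/k} ≤ e^{1/e} ν √k. -/
/-!
With `t = √k / ν`, the elementary inequality `y ≤ exp (y - 1)` applied to `y = t|x|/k` gives
`|x| ^ k ≤ (k / (t e)) ^ k (exp (t x) + exp (-t x))`. Integrating and using the sub-Gaussian bound
`E exp (±t X) ≤ exp (k / 2)` yields `E|X|^k ≤ 2 (ν √k / √e) ^ k`, and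
`2 e^{-1/2} ≤ e^{1/e}` absorbs the factor `2`.
-/

open MeasureTheory Real ProbabilityTheory
open scoped NNReal

lemma pow_le_div_exp_one_pow_mul_exp {x : ℝ} (hx : 0 ≤ x) (n : ℕ) :
    x ^ n ≤ (n / exp 1) ^ n * exp x := by
  rcases Nat.eq_zero_or_pos n with rfl | hn
  · simpa using one_le_exp hx
  have hn' : (0 : ℝ) < n := by exact_mod_cast hn
  have hy : x / n ≤ exp (x / n - 1) := by linarith [add_one_le_exp (x / n - 1)]
  calc x ^ n = n ^ n * (x / n) ^ n := by rw [← mul_pow, mul_div_cancel₀ _ hn'.ne']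
    _ ≤ n ^ n * exp (x / n - 1) ^ n := by gcongr
    _ = (n / exp 1) ^ n * exp x := by
      rw [exp_sub, div_pow, ← exp_nat_mul, mul_div_cancel₀ _ hn'.ne', div_pow]
      ring

lemma abs_pow_le_mul_exp_add_exp {t : ℝ} (ht : 0 < t) (x : ℝ) (n : ℕ) :
    |x| ^ n ≤ (n / (t * exp 1)) ^ n * (exp (t * x) + exp (-(t * x))) := by
  have htx : t * |x| = |t * x| := by rw [abs_mul, abs_of_pos ht]
  calc |x| ^ n = (t * |x|) ^ n / t ^ n := by rw [mul_pow]; field_simp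
    _ ≤ (n / exp 1) ^ n * exp (t * |x|) / t ^ n := by
      gcongr; exact pow_le_div_exp_one_pow_mul_exp (by positivity) n
    _ ≤ (n / exp 1) ^ n * (exp (t * x) + exp (-(t * x))) / t ^ n := by
      gcongr; rw [htx]; exact exp_abs_le _
    _ = (n / (t * exp 1)) ^ n * (exp (t * x) + exp (-(t * x))) := by ring

section Moments

variable {Ω : Type*} {mΩ : MeasurableSpace Ω} {μ : Measure Ω} {X : Ω → ℝ}

lemma integral_abs_pow_le_mgf_add_mgf (hX : AEStronglyMeasurable X μ) {t : ℝ} (ht : 0 < t)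
    (hpos : Integrable (fun ω ↦ exp (t * X ω)) μ)
    (hneg : Integrable (fun ω ↦ exp (-t * X ω)) μ) (n : ℕ) :
    ∫ ω, |X ω| ^ n ∂μ ≤ (n / (t * exp 1)) ^ n * (mgf X μ t + mgf X μ (-t)) := by
  simp only [neg_mul] at hneg
  set bound := fun ω ↦ (n / (t * exp 1)) ^ n * (exp (t * X ω) + exp (-(t * X ω)))
  have hdom : Integrable bound μ := (hpos.add hneg).const_mul _
  have hbound : ∀ ω, |X ω| ^ n ≤ bound ω := fun ω ↦ abs_pow_le_mul_exp_add_exp ht (X ω) n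
  have hpow_int : Integrable (fun ω ↦ |X ω| ^ n) μ := by
    refine hdom.mono' (hX.norm.pow n) (Filter.Eventually.of_forall fun ω ↦ ?_)
    rw [norm_of_nonneg (by positivity)]
    exact hbound ω
  calc ∫ ω, |X ω| ^ n ∂μ ≤ _ := integral_mono hpow_int hdom hbound
    _ = (n / (t * exp 1)) ^ n * (mgf X μ t + mgf X μ (-t)) := by
      rw [integral_const_mul, integral_add hpos hneg]
      simp only [mgf, neg_mul]

lemma ProbabilityTheory.HasSubgaussianMGF.integral_abs_pow_le {c : ℝ≥0}
    (h : HasSubgaussianMGF X c μ) (hc : 0 < c) {n : ℕ} (hn : 0 < n) :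
    ∫ ω, |X ω| ^ n ∂μ ≤ 2 * (√(c * n) / exp (1 / 2)) ^ n := by
  have hc' : (0 : ℝ) < c := hc
  have hn' : (0 : ℝ) < n := by exact_mod_cast hn
  set t := √n / √c with ht
  have ht0 : 0 < t := by positivity
  have hmgf : ∀ s, s ^ 2 = t ^ 2 → mgf X μ s ≤ exp (1 / 2) ^ n := fun s hs ↦ by
    calc mgf X μ s ≤ exp (c * s ^ 2 / 2) := h.mgf_le s
      _ = exp (1 / 2) ^ n := by
        rw [hs, ht, div_pow, sq_sqrt hn'.le, sq_sqrt hc'.le, ← exp_nat_mul]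
        field_simp
  calc ∫ ω, |X ω| ^ n ∂μ ≤ (n / (t * exp 1)) ^ n * (mgf X μ t + mgf X μ (-t)) :=
        integral_abs_pow_le_mgf_add_mgf h.aestronglyMeasurable ht0 (h.integrable_exp_mul t)
          (h.integrable_exp_mul (-t)) n
    _ ≤ (n / (t * exp 1)) ^ n * (exp (1 / 2) ^ n + exp (1 / 2) ^ n) := by
      gcongr
      · exact hmgf t rfl
      · exact hmgf (-t) (neg_sq t)
    _ = 2 * (√(c * n) / exp (1 / 2)) ^ n := by
      have he : exp 1 = exp (1 / 2) * exp (1 / 2) := by rw [← exp_add]; norm_num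
      have hscale : (n : ℝ) / (t * exp 1) = √(c * n) / exp (1 / 2) / exp (1 / 2) := by
        rw [ht, he, sqrt_mul hc'.le]
        field_simp
        rw [sq_sqrt hn'.le]
      rw [hscale, div_pow]
      field_simp
      ring

end Moments

lemma two_le_exp_half_mul_exp_inv_exp_one : 2 ≤ exp (1 / 2) * exp (1 / exp 1) := by
  have hhalf : 3 / 2 ≤ exp (1 / 2) := by linarith [add_one_le_exp (1 / 2)]
  have hthird : 1 / 3 ≤ 1 / exp 1 :=
    one_div_le_one_div_of_le (exp_pos 1) exp_one_lt_three.le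
  have hinv : 4 / 3 ≤ exp (1 / exp 1) := by linarith [add_one_le_exp (1 / exp 1)]
  nlinarith

theorem subGaussian_moment_bound_general
    {Ω : Type*} [MeasurableSpace Ω] (μ : Measure Ω) [IsProbabilityMeasure μ]
    (X : Ω → ℝ) (ν : ℝ) (hν : 0 < ν)
    (hint : ∀ a : ℝ, Integrable (fun ω => rexp (a * X ω)) μ)
    (hsg : ∀ a : ℝ, ∫ ω, rexp (a * X ω) ∂μ ≤ rexp (ν ^ 2 * a ^ 2 / 2))
    (k : ℕ) (hk : 1 ≤ k) :
    (∫ ω, |X ω| ^ k ∂μ) ^ ((1 : ℝ) / k) ≤ rexp (1 / exp 1) * ν * Real.sqrt k := by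
  have hsub : HasSubgaussianMGF X ⟨ν ^ 2, sq_nonneg ν⟩ μ := ⟨hint, hsg⟩
  have htwo := two_le_exp_half_mul_exp_inv_exp_one
  have hmoment : ∫ ω, |X ω| ^ k ∂μ ≤ (rexp (1 / exp 1) * ν * √k) ^ k := calc
    ∫ ω, |X ω| ^ k ∂μ ≤ 2 * (√(ν ^ 2 * k) / exp (1 / 2)) ^ k :=
        hsub.integral_abs_pow_le (NNReal.coe_pos.mp (pow_pos hν 2)) hk
    _ ≤ (exp (1 / 2) * exp (1 / exp 1)) ^ k * (√(ν ^ 2 * k) / exp (1 / 2)) ^ k := by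
      gcongr
      exact htwo.trans (le_self_pow₀ (by linarith) (by omega))
    _ = (rexp (1 / exp 1) * ν * √k) ^ k := by
      rw [← mul_pow, sqrt_mul (sq_nonneg ν), sqrt_sq hν.le]
      field_simp
  calc (∫ ω, |X ω| ^ k ∂μ) ^ ((1 : ℝ) / k)
      ≤ ((rexp (1 / exp 1) * ν * √k) ^ k) ^ ((1 : ℝ) / k) :=
        rpow_le_rpow (integral_nonneg fun ω ↦ by positivity) hmoment (by positivity)
    _ = rexp (1 / exp 1) * ν * √k := by
      rw [one_div (k : ℝ), pow_rpow_inv_natCast (by positivity) (by omega)]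

/-- For a centered sub-Gaussian random variable `X` with parameter `ν²`
(meaning `E[exp(aX)] ≤ exp(ν²a²/2)` for all real `a`, with `E X = 0`),
for any integer `k ≥ 1` the `k`-th absolute moment satisfies
`(E|X|^k)^(1/k) ≤ e^{1/e} ν √k`. -/
theorem subGaussian_moment_bound
    {Ω : Type*} [MeasurableSpace Ω] (μ : Measure Ω) [IsProbabilityMeasure μ]
    (X : Ω → ℝ) (ν : ℝ) (hν : 0 < ν)
    (hmeas : Measurable X)
    (hcentered : ∫ ω, X ω ∂μ = 0)
    (hint : ∀ a : ℝ, Integrable (fun ω => rexp (a * X ω)) μ)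
    (hsg : ∀ a : ℝ, ∫ ω, rexp (a * X ω) ∂μ ≤ rexp (ν ^ 2 * a ^ 2 / 2))
    (k : ℕ) (hk : 1 ≤ k) :
    (∫ ω, |X ω| ^ k ∂μ) ^ ((1 : ℝ) / k) ≤ rexp (1 / exp 1) * ν * Real.sqrt k :=
  subGaussian_moment_bound_general μ X ν hν hint hsg k hk
end

section
/- Let θ̂ minimize θ ↦ (1/n)‖Y − Zθ‖₂² + λ‖θ‖₁ over ℝ^p, where Y = Zθ₀ + ε. If 2‖(1/n)Zᵀε‖_∞ ≤ λ/2 (i.e., λ is at least four times the empirical correlation of noise with the design), then the error vector v = θ̂ − θ₀ satisfies the cone condition ‖v_{S^c}‖₁ ≤ 3‖v_S‖₁, where S is the support of θ₀. -/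
/-!
Comparing the objective at `θ̂` with its value at `θ₀` and expanding the square gives the basic
inequality `(1/n)‖Zv‖² + λ‖θ̂‖₁ ≤ (2/n)⟪Zᵀε, v⟫ + λ‖θ₀‖₁`. Hölder's inequality and the noise
condition bound the cross term by `(λ/2)‖v‖₁`, while the support of `θ₀` gives
`‖θ₀‖₁ - ‖θ̂‖₁ ≤ ‖v_S‖₁ - ‖v_{Sᶜ}‖₁`. Dropping `‖Zv‖² ≥ 0` leaves
`0 ≤ (λ/2)(‖v_S‖₁ + ‖v_{Sᶜ}‖₁) + λ(‖v_S‖₁ - ‖v_{Sᶜ}‖₁)`, i.e. `‖v_{Sᶜ}‖₁ ≤ 3‖v_S‖₁`.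
-/

open Finset Matrix

lemma sum_mul_le_mul_sum_abs_of_abs_le {ι : Type*} {s : Finset ι} {c v : ι → ℝ} {M : ℝ}
    (hc : ∀ j ∈ s, |c j| ≤ M) : ∑ j ∈ s, c j * v j ≤ M * ∑ j ∈ s, |v j| := by
  rw [mul_sum]
  refine sum_le_sum fun j hj => ?_
  calc c j * v j ≤ |c j| * |v j| := by rw [← abs_mul]; exact le_abs_self _
    _ ≤ M * |v j| := mul_le_mul_of_nonneg_right (hc j hj) (abs_nonneg _)

section

variable {m ι : Type*} [Fintype m] [Fintype ι]

lemma sum_sq_sub_mulVec (Z : Matrix m ι ℝ) (ε : m → ℝ) (w : ι → ℝ) :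
    ∑ i, (ε i - (Z *ᵥ w) i) ^ 2 =
      ∑ i, ε i ^ 2 - 2 * ∑ j, (Zᵀ *ᵥ ε) j * w j + ∑ i, (Z *ᵥ w) i ^ 2 := by
  have hcross : ∑ i, ε i * (Z *ᵥ w) i = ∑ j, (Zᵀ *ᵥ ε) j * w j := by
    change ε ⬝ᵥ (Z *ᵥ w) = (Zᵀ *ᵥ ε) ⬝ᵥ w
    rw [dotProduct_mulVec, mulVec_transpose]
  rw [← hcross, mul_sum, ← sum_sub_distrib, ← sum_add_distrib]
  exact sum_congr rfl fun i _ => by ring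

lemma sum_abs_sub_sum_abs_le_of_support_subset [DecidableEq ι] {θ₀ : ι → ℝ} {S : Finset ι}
    (hsupp : Function.support θ₀ ⊆ S) (θ : ι → ℝ) :
    ∑ j, |θ₀ j| - ∑ j, |θ j| ≤ ∑ j ∈ S, |θ j - θ₀ j| - ∑ j ∈ Sᶜ, |θ j - θ₀ j| := by
  have hzero : ∀ j ∈ Sᶜ, θ₀ j = 0 := fun j hj =>
    Function.notMem_support.mp fun h => mem_compl.mp hj (hsupp h)
  have hS : ∑ j ∈ S, |θ₀ j| - ∑ j ∈ S, |θ j| ≤ ∑ j ∈ S, |θ j - θ₀ j| := by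
    rw [← sum_sub_distrib]
    exact sum_le_sum fun j _ => by rw [abs_sub_comm]; exact abs_sub_abs_le_abs_sub _ _
  have hSc : ∑ j ∈ Sᶜ, |θ j| = ∑ j ∈ Sᶜ, |θ j - θ₀ j| :=
    sum_congr rfl fun j hj => by rw [hzero j hj, sub_zero]
  have hSc₀ : ∑ j ∈ Sᶜ, |θ₀ j| = 0 := sum_eq_zero fun j hj => by rw [hzero j hj, abs_zero]
  rw [← sum_add_sum_compl S, ← sum_add_sum_compl S fun j => |θ j|, hSc, hSc₀]
  linarith

lemma lasso_basic_inequality (Z : Matrix m ι ℝ) (ε : m → ℝ) (θ₀ θhat : ι → ℝ) {a lam : ℝ}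
    (hle : a * ∑ i, ((Z *ᵥ θ₀ + ε) i - (Z *ᵥ θhat) i) ^ 2 + lam * ∑ j, |θhat j| ≤
      a * ∑ i, ((Z *ᵥ θ₀ + ε) i - (Z *ᵥ θ₀) i) ^ 2 + lam * ∑ j, |θ₀ j|) :
    a * ∑ i, (Z *ᵥ (θhat - θ₀)) i ^ 2 + lam * ∑ j, |θhat j| ≤
      2 * a * ∑ j, (Zᵀ *ᵥ ε) j * (θhat j - θ₀ j) + lam * ∑ j, |θ₀ j| := by
  have hres : ∀ i, (Z *ᵥ θ₀ + ε) i - (Z *ᵥ θhat) i = ε i - (Z *ᵥ (θhat - θ₀)) i := fun i => by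
    rw [mulVec_sub, Pi.add_apply, Pi.sub_apply]; ring
  have hexpand : ∑ i, ((Z *ᵥ θ₀ + ε) i - (Z *ᵥ θhat) i) ^ 2 = ∑ i, ε i ^ 2 -
      2 * ∑ j, (Zᵀ *ᵥ ε) j * (θhat j - θ₀ j) + ∑ i, (Z *ᵥ (θhat - θ₀)) i ^ 2 := by
    simp_rw [hres]; exact sum_sq_sub_mulVec Z ε (θhat - θ₀)
  have hnull : ∑ i, ((Z *ᵥ θ₀ + ε) i - (Z *ᵥ θ₀) i) ^ 2 = ∑ i, ε i ^ 2 := by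
    simp only [Pi.add_apply, add_sub_cancel_left]
  rw [hexpand, hnull] at hle
  linear_combination hle

end

theorem lasso_cone_condition_general
    {n p : ℕ}
    (Z : Matrix (Fin n) (Fin p) ℝ) (ε : Fin n → ℝ)
    (θ₀ θhat : Fin p → ℝ) (S : Finset (Fin p))
    (hsupp : ∀ j, θ₀ j ≠ 0 → j ∈ S)
    (lam : ℝ) (hlam : 0 < lam)
    (Y : Fin n → ℝ) (hY : Y = Z.mulVec θ₀ + ε)
    (hmin : ∀ θ : Fin p → ℝ,
      (1 / (n : ℝ)) * ∑ i, (Y i - Z.mulVec θhat i) ^ 2 + lam * ∑ j, |θhat j| ≤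
        (1 / (n : ℝ)) * ∑ i, (Y i - Z.mulVec θ i) ^ 2 + lam * ∑ j, |θ j|)
    (hnoise : ∀ j, 2 * |(1 / (n : ℝ)) * ∑ i, Z i j * ε i| ≤ lam / 2) :
    ∑ j ∈ Sᶜ, |θhat j - θ₀ j| ≤ 3 * ∑ j ∈ S, |θhat j - θ₀ j| := by
  subst hY
  have hbasic := lasso_basic_inequality Z ε θ₀ θhat (hmin θ₀)
  have hfit : 0 ≤ (1 / (n : ℝ)) * ∑ i, (Z *ᵥ (θhat - θ₀)) i ^ 2 := by positivity
  have hholder : 2 * (1 / (n : ℝ)) * ∑ j, (Zᵀ *ᵥ ε) j * (θhat j - θ₀ j) ≤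
      lam / 2 * ∑ j, |θhat j - θ₀ j| := by
    rw [mul_sum]
    simp_rw [← mul_assoc]
    refine sum_mul_le_mul_sum_abs_of_abs_le fun j _ => ?_
    rw [mul_assoc, abs_mul, abs_two]
    exact hnoise j
  have hsparse := mul_le_mul_of_nonneg_left
    (sum_abs_sub_sum_abs_le_of_support_subset (fun j => hsupp j) θhat) hlam.le
  rw [← sum_add_sum_compl S fun j => |θhat j - θ₀ j|] at hholder
  exact le_of_mul_le_mul_left (by linarith) hlam

/-- Basic inequality / cone condition for the Lasso. Let `θ̂` minimize
`θ ↦ (1/n)‖Y − Zθ‖₂² + λ‖θ‖₁` over `ℝ^p`, where `Y = Zθ₀ + ε` and `θ₀` is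
supported on `S`. If `2‖(1/n)Zᵀε‖_∞ ≤ λ/2`, then the error `v = θ̂ − θ₀`
satisfies `‖v_{S^c}‖₁ ≤ 3‖v_S‖₁`. -/
theorem lasso_cone_condition
    {n p : ℕ} (hn : 0 < n)
    (Z : Matrix (Fin n) (Fin p) ℝ) (ε : Fin n → ℝ)
    (θ₀ θhat : Fin p → ℝ) (S : Finset (Fin p))
    (hsupp : ∀ j, θ₀ j ≠ 0 → j ∈ S)
    (lam : ℝ) (hlam : 0 < lam)
    (Y : Fin n → ℝ) (hY : Y = Z.mulVec θ₀ + ε)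
    (hmin : ∀ θ : Fin p → ℝ,
      (1 / (n : ℝ)) * ∑ i, (Y i - Z.mulVec θhat i) ^ 2 + lam * ∑ j, |θhat j| ≤
        (1 / (n : ℝ)) * ∑ i, (Y i - Z.mulVec θ i) ^ 2 + lam * ∑ j, |θ j|)
    (hnoise : ∀ j, 2 * |(1 / (n : ℝ)) * ∑ i, Z i j * ε i| ≤ lam / 2) :
    ∑ j ∈ Sᶜ, |θhat j - θ₀ j| ≤ 3 * ∑ j ∈ S, |θhat j - θ₀ j| :=
  lasso_cone_condition_general Z ε θ₀ θhat S hsupp lam hlam Y hY hmin hnoise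
end

section
/- Suppose f : ℝ^d → ℝ is convex and differentiable, x* minimizes f over a convex set 𝒳̃, and x̃ minimizes f over the subset {x ∈ 𝒳̃ : x_{Ŝ^c} = 0} for some index set Ŝ. Suppose x* is supported on a set S ⊇ Ŝ, and ‖[∇f(x̃)]_{S∖Ŝ}‖_∞ ≤ 2η. If x* restricted to Ŝ lies in 𝒳̃, then f(x̃) − f(x*) ≤ ∇f(x̃)ᵀ(x̃ − x*) ≤ 2η‖x*‖₁. -/
/-!
The first inequality is the gradient inequality of a convex function. For the second, write
`x̃ - x* = (x̃ - x*_Ŝ) + (x*_Ŝ - x*)`, where `x*_Ŝ` is the restriction of `x*` to `Ŝ`. Since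
`x*_Ŝ` is feasible for the restricted problem solved by `x̃`, first-order optimality gives
`⟨∇f(x̃), x̃ - x*_Ŝ⟩ ≤ 0`. The vector `x*_Ŝ - x*` is supported on `S ∖ Ŝ`, where the gradient is
bounded by `2η`, so Hölder's inequality bounds the remaining term by `2η ‖x*‖₁`.
-/

open Finset

section FirstOrder

variable {E : Type*} [NormedAddCommGroup E] [NormedSpace ℝ E]
  {s : Set E} {f : E → ℝ} {f' : StrongDual ℝ E} {x y : E}

theorem ConvexOn.hasFDerivAt_add_sub_le (hf : ConvexOn ℝ s f) (hx : x ∈ s) (hy : y ∈ s)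
    (hf' : HasFDerivAt f f' x) : f x + f' (y - x) ≤ f y := by
  have hline : ConvexOn ℝ (AffineMap.lineMap (k := ℝ) x y ⁻¹' s) (f ∘ AffineMap.lineMap x y) :=
    hf.comp_affineMap _
  have hderiv : HasDerivAt (f ∘ AffineMap.lineMap (k := ℝ) x y) (f' (y - x)) 0 := by
    have hf'0 : HasFDerivAt f f' (AffineMap.lineMap x y (0 : ℝ)) := by simpa using hf'
    exact hf'0.comp_hasDerivAt 0 AffineMap.hasDerivAt_lineMap
  have hslope := hline.le_slope_of_hasDerivAt (by simpa) (by simpa) zero_lt_one hderiv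
  simp only [slope, Function.comp_apply, AffineMap.lineMap_apply_zero,
    AffineMap.lineMap_apply_one, sub_zero, inv_one, one_smul, vsub_eq_sub] at hslope
  linarith

theorem IsMinOn.hasFDerivAt_sub_nonneg (h : IsMinOn f s x) (hs : Convex ℝ s) (hx : x ∈ s)
    (hy : y ∈ s) (hf' : HasFDerivAt f f' x) : 0 ≤ f' (y - x) :=
  h.localize.hasFDerivWithinAt_nonneg hf'.hasFDerivWithinAt
    (sub_mem_posTangentConeAt_of_segment_subset (hs.segment_subset hx hy))

end FirstOrder

namespace EuclideanSpace

variable {ι : Type*}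

theorem real_inner_eq_sum_mul [Fintype ι] (x y : EuclideanSpace ℝ ι) :
    inner ℝ x y = ∑ i, x i * y i := by
  simp [PiLp.inner_apply, mul_comm]

theorem convex_setOf_forall_notMem_eq_zero (T : Finset ι) :
    Convex ℝ {x : EuclideanSpace ℝ ι | ∀ i ∉ T, x i = 0} := by
  intro x hx y hy a b _ _ _ i hi
  simp [hx i hi, hy i hi]

end EuclideanSpace

theorem sum_mul_restrict_sub_le {ι : Type*} [Fintype ι] [DecidableEq ι] {S T : Finset ι}
    {g x x' : ι → ℝ} {c : ℝ} (hc : 0 ≤ c) (hx : ∀ i ∉ S, x i = 0)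
    (hx' : ∀ i, x' i = if i ∈ T then x i else 0) (hg : ∀ i ∈ S \ T, |g i| ≤ c) :
    ∑ i, g i * (x' i - x i) ≤ c * ∑ i, |x i| := by
  rw [mul_sum]
  refine sum_le_sum fun i _ => ?_
  rw [hx' i]
  by_cases hiT : i ∈ T
  · simp only [hiT, if_true, sub_self, mul_zero]
    positivity
  by_cases hiS : i ∈ S
  · simp only [hiT, if_false, zero_sub, mul_neg]
    calc -(g i * x i) ≤ |g i| * |x i| := by rw [← abs_mul]; exact neg_le_abs _
      _ ≤ c * |x i| := by gcongr; exact hg i (mem_sdiff.2 ⟨hiS, hiT⟩)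
  · simp [hx i hiS]

theorem restricted_minimizer_gap_bound_general
    {d : ℕ} (f : EuclideanSpace ℝ (Fin d) → ℝ)
    (Xt : Set (EuclideanSpace ℝ (Fin d))) (hXt : Convex ℝ Xt)
    (hconv : ConvexOn ℝ Set.univ f)
    (gradf : EuclideanSpace ℝ (Fin d) → EuclideanSpace ℝ (Fin d))
    (hdiff : ∀ x, HasGradientAt f (gradf x) x)
    (S Shat : Finset (Fin d))
    (xstar xt : EuclideanSpace ℝ (Fin d))
    (hxstar_supp : ∀ i ∉ S, xstar i = 0)
    (hxt_mem : xt ∈ Xt) (hxt_supp : ∀ i ∉ Shat, xt i = 0)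
    (hxt_min : ∀ x ∈ Xt, (∀ i ∉ Shat, x i = 0) → f xt ≤ f x)
    (η : ℝ) (hη : 0 < η)
    (hgrad_small : ∀ i ∈ S \ Shat, |gradf xt i| ≤ 2 * η)
    (xstar' : EuclideanSpace ℝ (Fin d))
    (hxstar' : ∀ i, xstar' i = if i ∈ Shat then xstar i else 0)
    (hxstar'_mem : xstar' ∈ Xt) :
    f xt - f xstar ≤ ∑ i, gradf xt i * (xt i - xstar i) ∧
      ∑ i, gradf xt i * (xt i - xstar i) ≤ 2 * η * ∑ i, |xstar i| := by
  set g := gradf xt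
  have hderiv := (hdiff xt).hasFDerivAt
  have hgap : f xt + inner ℝ g (xstar - xt) ≤ f xstar := by
    simpa using hconv.hasFDerivAt_add_sub_le trivial trivial hderiv
  have hopt : 0 ≤ inner ℝ g (xstar' - xt) := by
    have hmin : IsMinOn f (Xt ∩ {x | ∀ i ∉ Shat, x i = 0}) xt :=
      fun x hx => hxt_min x hx.1 hx.2
    have hx'_supp : ∀ i ∉ Shat, xstar' i = 0 := fun i hi => by simp [hxstar' i, hi]
    simpa using hmin.hasFDerivAt_sub_nonneg
      (hXt.inter (EuclideanSpace.convex_setOf_forall_notMem_eq_zero Shat))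
      ⟨hxt_mem, hxt_supp⟩ ⟨hxstar'_mem, hx'_supp⟩ hderiv
  have hholder : ∑ i, g i * (xstar' i - xstar i) ≤ 2 * η * ∑ i, |xstar i| :=
    sum_mul_restrict_sub_le (by positivity) hxstar_supp hxstar' hgrad_small
  simp only [EuclideanSpace.real_inner_eq_sum_mul, PiLp.sub_apply, mul_sub, sum_sub_distrib]
    at hgap hopt hholder ⊢
  exact ⟨by linarith, by linarith⟩

/-- Restricted-minimizer comparison. Let `f` be convex and differentiable,
`x*` a minimizer of `f` over a convex set `𝒳̃` supported on `S ⊇ Ŝ`, and `x̃` a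
minimizer of `f` over `{x ∈ 𝒳̃ : x_{Ŝᶜ} = 0}`. If
`‖[∇f(x̃)]_{S∖Ŝ}‖_∞ ≤ 2η` and the restriction of `x*` to `Ŝ` lies in `𝒳̃`, then
`f(x̃) − f(x*) ≤ ∇f(x̃)ᵀ(x̃ − x*) ≤ 2η‖x*‖₁`. -/
theorem restricted_minimizer_gap_bound
    {d : ℕ} (f : EuclideanSpace ℝ (Fin d) → ℝ)
    (Xt : Set (EuclideanSpace ℝ (Fin d))) (hXt : Convex ℝ Xt)
    (hconv : ConvexOn ℝ Set.univ f)
    (gradf : EuclideanSpace ℝ (Fin d) → EuclideanSpace ℝ (Fin d))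
    (hdiff : ∀ x, HasGradientAt f (gradf x) x)
    (S Shat : Finset (Fin d)) (hSS : Shat ⊆ S)
    (xstar xt : EuclideanSpace ℝ (Fin d))
    (hxstar_mem : xstar ∈ Xt)
    (hxstar_min : ∀ x ∈ Xt, f xstar ≤ f x)
    (hxstar_supp : ∀ i ∉ S, xstar i = 0)
    (hxt_mem : xt ∈ Xt) (hxt_supp : ∀ i ∉ Shat, xt i = 0)
    (hxt_min : ∀ x ∈ Xt, (∀ i ∉ Shat, x i = 0) → f xt ≤ f x)
    (η : ℝ) (hη : 0 < η)
    (hgrad_small : ∀ i ∈ S \ Shat, |gradf xt i| ≤ 2 * η)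
    (xstar' : EuclideanSpace ℝ (Fin d))
    (hxstar' : ∀ i, xstar' i = if i ∈ Shat then xstar i else 0)
    (hxstar'_mem : xstar' ∈ Xt) :
    f xt - f xstar ≤ ∑ i, gradf xt i * (xt i - xstar i) ∧
      ∑ i, gradf xt i * (xt i - xstar i) ≤ 2 * η * ∑ i, |xstar i| :=
  restricted_minimizer_gap_bound_general f Xt hXt hconv gradf hdiff S Shat xstar xt hxstar_supp
    hxt_mem hxt_supp hxt_min η hη hgrad_small xstar' hxstar' hxstar'_mem
end

section
/- Let ‖·‖_ψ be a norm with dual norm ‖·‖_{ψ*}, Δ_ψ a Bregman divergence that is κ-strongly convex with respect to ‖·‖_ψ, and f convex and H̃-smooth with respect to ‖·‖_ψ (i.e., f(y) ≤ f(x) + ⟨∇f(x), y−x⟩ + (H̃/2)‖x−y‖_ψ² for all x, y). Let η < κ/H̃ and let x_{t+1} = argmin_{x ∈ 𝒳̃} {η⟨g̃_t, x − x_t⟩ + Δ_ψ(x, x_t)} for an arbitrary vector g̃_t. Then for every x* ∈ 𝒳̃, with g_t = ∇f(x_t): η[f(x_{t+1}) − f(x*)] + Δ_ψ(x_{t+1},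 x*) ≤ Δ_ψ(x_t, x*) + η⟨g̃_t − g_t, x* − x_t⟩ + η²‖g̃_t − g_t‖_{ψ*}²/(2(κ − H̃η)). -/
/-!
First-order optimality of `x₁` for the mirror step, combined with the three-point identity
for Bregman divergences, gives
`Δψ(x₁, x*) + Δψ(x_t, x₁) ≤ Δψ(x_t, x*) + η⟨g̃_t, x* − x₁⟩`.
Smoothness of `f` at `x_t` and the gradient inequality of convexity bound
`η(f(x₁) − f(x*))` by `η⟨∇f(x_t), x₁ − x*⟩ + ηH̃/2 ‖x_t − x₁‖²`. After adding the two,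
the error term `η⟨g̃_t − ∇f(x_t), x_t − x₁⟩` is bounded by duality and Young's inequality
against the `(κ − ηH̃)/2 ‖x_t − x₁‖²` left over from strong convexity of `Δψ(x_t, x₁)`.
-/

open InnerProductSpace Set

section Calculus

variable {E : Type*} [NormedAddCommGroup E] [NormedSpace ℝ E]

theorem ConvexOn.apply_sub_le_of_hasFDerivAt {f : E → ℝ} {f' : E →L[ℝ] ℝ} {x : E}
    (hf : ConvexOn ℝ univ f) (hf' : HasFDerivAt f f' x) (y : E) :
    f' (y - x) ≤ f y - f x := by
  have hline : HasDerivAt (f ∘ AffineMap.lineMap (k := ℝ) x y) (f' (y - x)) 0 :=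
    hf'.comp_hasDerivAt_of_eq 0 AffineMap.hasDerivAt_lineMap
      (AffineMap.lineMap_apply_zero x y).symm
  simpa [slope] using (hf.comp_affineMap (AffineMap.lineMap x y)).le_slope_of_hasDerivAt
    (mem_univ 0) (mem_univ 1) zero_lt_one hline

theorem IsMinOn.apply_sub_nonneg_of_hasFDerivAt {φ : E → ℝ} {φ' : E →L[ℝ] ℝ} {s : Set E}
    {a y : E} (hmin : IsMinOn φ s a) (hφ : HasFDerivAt φ φ' a) (hs : Convex ℝ s) (ha : a ∈ s)
    (hy : y ∈ s) : 0 ≤ φ' (y - a) :=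
  hmin.localize.hasFDerivWithinAt_nonneg hφ.hasFDerivWithinAt
    (sub_mem_posTangentConeAt_of_segment_subset (hs.segment_subset ha hy))

end Calculus

namespace Seminorm

variable {E : Type*} [NormedAddCommGroup E] [NormedSpace ℝ E] [FiniteDimensional ℝ E]

theorem exists_pos_mul_norm_le (p : Seminorm ℝ E) (hp : ∀ x, p x = 0 → x = 0) :
    ∃ c > 0, ∀ x, c * ‖x‖ ≤ p x := by
  have hcont : Continuous p := p.convexOn.locallyLipschitz.continuous
  obtain ⟨c, hc, hcp⟩ := (isCompact_sphere (0 : E) 1).exists_forall_le' hcont.continuousOn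
    (a := 0) fun u hu ↦ (apply_nonneg p u).lt_of_ne' fun h ↦ by
      simp [hp u h] at hu
  refine ⟨c, hc, fun x ↦ ?_⟩
  rcases eq_or_ne x 0 with rfl | hx
  · simp
  have hu : ‖x‖⁻¹ • x ∈ Metric.sphere (0 : E) 1 := by
    simp [norm_smul, hx]
  have := hcp _ hu
  rw [map_smul_eq_mul, norm_inv, norm_norm] at this
  rwa [le_inv_mul_iff₀ (norm_pos_iff.2 hx), mul_comm] at this

end Seminorm

section InnerProduct

variable {E : Type*} [NormedAddCommGroup E] [InnerProductSpace ℝ E]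

noncomputable def dualNorm (p : Seminorm ℝ E) (z : E) : ℝ :=
  sSup ((fun x ↦ ⟪z, x⟫_ℝ) '' {x | p x ≤ 1})

theorem Seminorm.inner_le_dualNorm_mul [FiniteDimensional ℝ E] (p : Seminorm ℝ E)
    (hp : ∀ x, p x = 0 → x = 0) (z v : E) : ⟪z, v⟫_ℝ ≤ dualNorm p z * p v := by
  obtain ⟨c, hc, hcp⟩ := p.exists_pos_mul_norm_le hp
  have hbdd : BddAbove ((fun x ↦ ⟪z, x⟫_ℝ) '' {x | p x ≤ 1}) := by
    refine ⟨‖z‖ * c⁻¹, ?_⟩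
    rintro _ ⟨x, hx, rfl⟩
    have hx' : ‖x‖ ≤ c⁻¹ := by
      rw [← mul_one c⁻¹, le_inv_mul_iff₀ hc]
      exact (hcp x).trans hx
    exact (real_inner_le_norm z x).trans (mul_le_mul_of_nonneg_left hx' (norm_nonneg z))
  rcases eq_or_ne v 0 with rfl | hv
  · simp
  have hpv : 0 < p v := (mul_pos hc (norm_pos_iff.2 hv)).trans_le (hcp v)
  have hunit : (p v)⁻¹ • v ∈ {x | p x ≤ 1} := by
    simp [map_smul_eq_mul, abs_of_pos hpv, hpv.ne']
  have := le_csSup hbdd (mem_image_of_mem _ hunit)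
  rw [real_inner_smul_right, inv_mul_le_iff₀ hpv] at this
  rwa [mul_comm] at this

def bregmanDiv (ψ : E → ℝ) (gradψ : E → E) (x y : E) : ℝ :=
  ψ y - ψ x - ⟪gradψ x, y - x⟫_ℝ

variable {ψ : E → ℝ} {gradψ : E → E}

theorem bregmanDiv_three_point (x y z : E) :
    bregmanDiv ψ gradψ x z - bregmanDiv ψ gradψ x y - bregmanDiv ψ gradψ y z =
      ⟪gradψ y - gradψ x, z - y⟫_ℝ := by
  simp only [bregmanDiv, inner_sub_left, inner_sub_right]
  ring

theorem bregmanDiv_add_le_of_isMinOn [CompleteSpace E] {s : Set E} {η : ℝ} {v c a y : E}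
    (hψ : HasGradientAt ψ (gradψ a) a) (hs : Convex ℝ s)
    (hmin : IsMinOn (fun x ↦ η * ⟪v, x - c⟫_ℝ + bregmanDiv ψ gradψ c x) s a) (ha : a ∈ s)
    (hy : y ∈ s) :
    bregmanDiv ψ gradψ a y + bregmanDiv ψ gradψ c a ≤
      bregmanDiv ψ gradψ c y + η * ⟪v, y - a⟫_ℝ := by
  have hderiv : HasFDerivAt (fun x ↦ η * ⟪v, x - c⟫_ℝ + bregmanDiv ψ gradψ c x)
      (η • innerSL ℝ v + (toDual ℝ E (gradψ a) - innerSL ℝ (gradψ c))) a := by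
    have hlin (u : E) : HasFDerivAt (fun x ↦ ⟪u, x - c⟫_ℝ) (innerSL ℝ u) a :=
      (innerSL ℝ u).hasFDerivAt.comp a ((hasFDerivAt_id a).sub_const c)
    exact ((hlin v).const_mul η).add
      ((hψ.hasFDerivAt.sub_const (ψ c)).sub (hlin (gradψ c)))
  have hopt := hmin.apply_sub_nonneg_of_hasFDerivAt hderiv hs ha hy
  simp only [FunLike.coe_add, FunLike.coe_smul, FunLike.coe_sub, Pi.add_apply, Pi.smul_apply,
    Pi.sub_apply, innerSL_apply_apply, toDual_apply_apply, smul_eq_mul] at hopt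
  have := bregmanDiv_three_point (ψ := ψ) (gradψ := gradψ) c a y
  rw [inner_sub_left] at this
  linarith

end InnerProduct

theorem mul_le_sq_div_add_mul_sq {a b s : ℝ} (hs : 0 < s) :
    a * b ≤ a ^ 2 / (2 * s) + s / 2 * b ^ 2 := by
  have hsq : 0 ≤ (a - s * b) ^ 2 / (2 * s) := by positivity
  have hexp : (a - s * b) ^ 2 / (2 * s) = a ^ 2 / (2 * s) + s / 2 * b ^ 2 - a * b := by
    field_simp
    ring
  linarith

theorem mirror_descent_one_step_general
    {d : ℕ} (N : EuclideanSpace ℝ (Fin d) → ℝ)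
    (hN_homog : ∀ (c : ℝ) (x), N (c • x) = |c| * N x)
    (hN_tri : ∀ x y, N (x + y) ≤ N x + N y)
    (hN_def : ∀ x, N x = 0 → x = 0)
    (Nstar : EuclideanSpace ℝ (Fin d) → ℝ)
    (hNstar : ∀ z, Nstar z = sSup ((fun x => ⟪z, x⟫_ℝ) '' {x | N x ≤ 1}))
    (ψ : EuclideanSpace ℝ (Fin d) → ℝ)
    (gradψ : EuclideanSpace ℝ (Fin d) → EuclideanSpace ℝ (Fin d))
    (hψdiff : ∀ x, HasGradientAt ψ (gradψ x) x)
    (Δψ : EuclideanSpace ℝ (Fin d) → EuclideanSpace ℝ (Fin d) → ℝ)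
    (hΔψ : ∀ x y, Δψ x y = ψ y - ψ x - ⟪gradψ x, y - x⟫_ℝ)
    (κ : ℝ)
    (hsc : ∀ x y, Δψ x y ≥ κ / 2 * (N (x - y)) ^ 2)
    (f : EuclideanSpace ℝ (Fin d) → ℝ)
    (hfconv : ConvexOn ℝ Set.univ f)
    (gradf : EuclideanSpace ℝ (Fin d) → EuclideanSpace ℝ (Fin d))
    (hfdiff : ∀ x, HasGradientAt f (gradf x) x)
    (Ht : ℝ) (hHt : 0 < Ht)
    (hsmooth : ∀ x y, f y ≤ f x + ⟪gradf x, y - x⟫_ℝ + Ht / 2 * (N (x - y)) ^ 2)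
    (η : ℝ) (hη : 0 < η) (hηκ : η < κ / Ht)
    (Xt : Set (EuclideanSpace ℝ (Fin d))) (hXt : Convex ℝ Xt)
    (xt gt' x1 : EuclideanSpace ℝ (Fin d))
    (hx1 : x1 ∈ Xt)
    (hx1min : ∀ x ∈ Xt,
      η * ⟪gt', x1 - xt⟫_ℝ + Δψ xt x1 ≤ η * ⟪gt', x - xt⟫_ℝ + Δψ xt x) :
    ∀ xstar ∈ Xt,
      η * (f x1 - f xstar) + Δψ x1 xstar ≤
        Δψ xt xstar + η * ⟪gt' - gradf xt, xstar - xt⟫_ℝ +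
          η ^ 2 * (Nstar (gt' - gradf xt)) ^ 2 / (2 * (κ - Ht * η)) := by
  intro xstar hxstar
  obtain rfl : Δψ = bregmanDiv ψ gradψ := funext₂ hΔψ
  let p : Seminorm ℝ (EuclideanSpace ℝ (Fin d)) :=
    Seminorm.of N hN_tri fun c x ↦ by rw [hN_homog, Real.norm_eq_abs]
  obtain rfl : Nstar = dualNorm p := funext hNstar
  set δ := gt' - gradf xt
  have hgap : 0 < κ - Ht * η := by
    have := (lt_div_iff₀ hHt).1 hηκ
    linarith
  have hmirror := bregmanDiv_add_le_of_isMinOn (hψdiff x1) hXt hx1min hx1 hxstar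
  have hconv : ⟪gradf xt, xstar - xt⟫_ℝ ≤ f xstar - f xt := by
    simpa using hfconv.apply_sub_le_of_hasFDerivAt (hfdiff xt).hasFDerivAt xstar
  have hdual : ⟪δ, xt - x1⟫_ℝ ≤ dualNorm p δ * N (xt - x1) :=
    p.inner_le_dualNorm_mul hN_def δ _
  have hyoung := mul_le_sq_div_add_mul_sq (a := η * dualNorm p δ) (b := N (xt - x1)) hgap
  have hsplit : ⟪gt', xstar - x1⟫_ℝ = ⟪δ, xstar - xt⟫_ℝ + ⟪δ, xt - x1⟫_ℝ +
      ⟪gradf xt, xstar - xt⟫_ℝ - ⟪gradf xt, x1 - xt⟫_ℝ := by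
    simp only [δ, inner_sub_left, inner_sub_right]
    ring
  linear_combination
    hmirror + η * (hconv + hsmooth xt x1 + hdual) + hyoung + hsc xt x1 + η * hsplit

/-- One-step mirror descent inequality with inexact gradients (Lan 2012,
Lemma 3). `N` is a norm on `ℝ^d` with dual norm `Nstar`, `Δψ` is a Bregman
divergence that is `κ`-strongly convex w.r.t. `N`, `f` is convex and
`H̃`-smooth w.r.t. `N`, `η < κ/H̃`, and `x₁` is the mirror descent update from
`x_t` with an arbitrary gradient estimate `g̃_t`. Then for every `x* ∈ 𝒳̃`:
`η[f(x₁) − f(x*)] + Δψ(x₁, x*) ≤ Δψ(x_t, x*) + η⟨g̃_t − g_t, x* − x_t⟩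
  + η²‖g̃_t − g_t‖_{ψ*}²/(2(κ − H̃η))`. -/
theorem mirror_descent_one_step
    {d : ℕ} (N : EuclideanSpace ℝ (Fin d) → ℝ)
    (hN_pos : ∀ x, 0 ≤ N x)
    (hN_homog : ∀ (c : ℝ) (x), N (c • x) = |c| * N x)
    (hN_tri : ∀ x y, N (x + y) ≤ N x + N y)
    (hN_def : ∀ x, N x = 0 → x = 0)
    (Nstar : EuclideanSpace ℝ (Fin d) → ℝ)
    (hNstar : ∀ z, Nstar z = sSup ((fun x => ⟪z, x⟫_ℝ) '' {x | N x ≤ 1}))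
    (ψ : EuclideanSpace ℝ (Fin d) → ℝ)
    (gradψ : EuclideanSpace ℝ (Fin d) → EuclideanSpace ℝ (Fin d))
    (hψdiff : ∀ x, HasGradientAt ψ (gradψ x) x)
    (hψconv : StrictConvexOn ℝ Set.univ ψ)
    (Δψ : EuclideanSpace ℝ (Fin d) → EuclideanSpace ℝ (Fin d) → ℝ)
    (hΔψ : ∀ x y, Δψ x y = ψ y - ψ x - ⟪gradψ x, y - x⟫_ℝ)
    (κ : ℝ) (hκ : 0 < κ)
    (hsc : ∀ x y, Δψ x y ≥ κ / 2 * (N (x - y)) ^ 2)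
    (f : EuclideanSpace ℝ (Fin d) → ℝ)
    (hfconv : ConvexOn ℝ Set.univ f)
    (gradf : EuclideanSpace ℝ (Fin d) → EuclideanSpace ℝ (Fin d))
    (hfdiff : ∀ x, HasGradientAt f (gradf x) x)
    (Ht : ℝ) (hHt : 0 < Ht)
    (hsmooth : ∀ x y, f y ≤ f x + ⟪gradf x, y - x⟫_ℝ + Ht / 2 * (N (x - y)) ^ 2)
    (η : ℝ) (hη : 0 < η) (hηκ : η < κ / Ht)
    (Xt : Set (EuclideanSpace ℝ (Fin d))) (hXt : Convex ℝ Xt)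
    (hXtc : IsClosed Xt)
    (xt gt' x1 : EuclideanSpace ℝ (Fin d)) (hxt : xt ∈ Xt)
    (hx1 : x1 ∈ Xt)
    (hx1min : ∀ x ∈ Xt,
      η * ⟪gt', x1 - xt⟫_ℝ + Δψ xt x1 ≤ η * ⟪gt', x - xt⟫_ℝ + Δψ xt x) :
    ∀ xstar ∈ Xt,
      η * (f x1 - f xstar) + Δψ x1 xstar ≤
        Δψ xt xstar + η * ⟪gt' - gradf xt, xstar - xt⟫_ℝ +
          η ^ 2 * (Nstar (gt' - gradf xt)) ^ 2 / (2 * (κ - Ht * η)) :=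
  mirror_descent_one_step_general N hN_homog hN_tri hN_def Nstar hNstar ψ gradψ hψdiff Δψ hΔψ κ hsc
    f hfconv gradf hfdiff Ht hHt hsmooth η hη hηκ Xt hXt xt gt' x1 hx1 hx1min
end

section
/- Martingale Bernstein inequality: let X₁,…,X_n be random variables with E[X_j | X₁,…,X_{j−1}] = 0, E[X_j² | X₁,…,X_{j−1}] ≤ σ², and E[|X_j|^k | X₁,…,X_{j−1}] ≤ (1/2)k!σ²b^{k−2} for all integers k ≥ 3. Then for all t > 0, P(|Σ_{j=1}^n X_j| ≥ t) ≤ 2 exp(−t²/(2(nσ² + bt))). -/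
/-!
Chernoff's method, with the moment generating function controlled through integrals over past
events only. For `s` in the past σ-algebra of step `j`, the conditional moment bounds integrate to
`∫_s |X_j|^k ≤ k!/2 σ² b^(k-2) μ(s)`; summing the exponential series of `e^{l|x|} - 1 - l|x|`
against them and using `∫_s X_j = 0` gives `∫_s e^{l X_j} ≤ e^C μ(s)` with
`C = l²σ²/(2(1 - l b))`. On the past σ-algebra this says `μ.withDensity e^{l X_j} ≤ e^C μ`, which
pulls `e^{l X_j}` out of `∫ e^{l S_j} e^{l X_j}` at the cost `e^C`, so `E e^{l S_n} ≤ e^{nC}`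
without any a priori integrability of the exponentials. Markov's inequality at
`l = t / (nσ² + bt)` gives the one-sided bound; apply it to `X` and to `-X`.
-/

open MeasureTheory Real Finset
open scoped ENNReal Nat

namespace Real

theorem hasSum_exp_sub_one_sub (x : ℝ) :
    HasSum (fun k : ℕ => x ^ (k + 2) / (k + 2)!) (rexp x - 1 - x) := by
  have h := (hasSum_nat_add_iff' 2).2 (exp_eq_exp_ℝ ▸ NormedSpace.expSeries_div_hasSum_exp x)
  simpa [Finset.sum_range_succ, sub_sub] using h

theorem exp_le_one_add_add_exp_abs_sub (x : ℝ) : rexp x ≤ 1 + x + (rexp |x| - 1 - |x|) := by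
  rcases le_total 0 x with hx | hx
  · rw [abs_of_nonneg hx]; linarith
  · have := sinh_le_self_iff.2 hx
    rw [sinh_eq] at this
    rw [abs_of_nonpos hx]
    linarith

end Real

namespace MeasureTheory

variable {Ω : Type*} {m mΩ : MeasurableSpace Ω} {μ : Measure Ω}

theorem lintegral_mul_le_of_forall_setLIntegral_le (hm : m ≤ mΩ) {Y g : Ω → ℝ≥0∞} {c : ℝ≥0∞}
    (hY : Measurable[m] Y) (hg : Measurable g)
    (h : ∀ s, MeasurableSet[m] s → ∫⁻ ω in s, g ω ∂μ ≤ c * μ s) :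
    ∫⁻ ω, Y ω * g ω ∂μ ≤ c * ∫⁻ ω, Y ω ∂μ := by
  have hle : (μ.withDensity g).trim hm ≤ c • μ.trim hm := by
    refine Measure.le_iff.2 fun s hs => ?_
    rw [trim_measurableSet_eq hm hs, withDensity_apply _ (hm s hs), Measure.smul_apply,
      trim_measurableSet_eq hm hs, smul_eq_mul]
    exact h s hs
  calc ∫⁻ ω, Y ω * g ω ∂μ = ∫⁻ ω, Y ω ∂(μ.withDensity g).trim hm := by
        rw [lintegral_trim hm hY, lintegral_withDensity_eq_lintegral_mul _ hg (hY.mono hm le_rfl)]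
        simp_rw [Pi.mul_apply, mul_comm]
    _ ≤ ∫⁻ ω, Y ω ∂(c • μ.trim hm) := lintegral_mono' hle le_rfl
    _ = c * ∫⁻ ω, Y ω ∂μ := by rw [lintegral_smul_measure, lintegral_trim hm hY, smul_eq_mul]

theorem setIntegral_le_of_condExp_le [IsFiniteMeasure μ] (hm : m ≤ mΩ) {g : Ω → ℝ} {c : ℝ}
    (hg : Integrable g μ) (hc : ∀ᵐ ω ∂μ, μ[g|m] ω ≤ c) {s : Set Ω} (hs : MeasurableSet[m] s) :
    ∫ ω in s, g ω ∂μ ≤ c * μ.real s := by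
  rw [← setIntegral_condExp hm hg hs, mul_comm, ← smul_eq_mul, ← setIntegral_const]
  exact setIntegral_mono_ae integrable_condExp.integrableOn integrableOn_const hc

theorem integrable_of_hasSum_of_nonneg {f : ℕ → Ω → ℝ} {F : Ω → ℝ}
    (hF : AEStronglyMeasurable F μ) (hf : ∀ k, Integrable (f k) μ) (hf0 : ∀ k ω, 0 ≤ f k ω)
    (hfF : ∀ ω, HasSum (f · ω) (F ω)) (hsum : Summable fun k => ∫ ω, f k ω ∂μ) :
    Integrable F μ ∧ HasSum (fun k => ∫ ω, f k ω ∂μ) (∫ ω, F ω ∂μ) := by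
  have hF0 : ∀ ω, 0 ≤ F ω := fun ω => (hfF ω).nonneg (hf0 · ω)
  have hlint : ∫⁻ ω, ENNReal.ofReal (F ω) ∂μ = ENNReal.ofReal (∑' k, ∫ ω, f k ω ∂μ) := by
    calc ∫⁻ ω, ENNReal.ofReal (F ω) ∂μ = ∑' k, ∫⁻ ω, ENNReal.ofReal (f k ω) ∂μ := by
          rw [← lintegral_tsum fun k => (hf k).aemeasurable.ennreal_ofReal]
          refine lintegral_congr fun ω => ?_
          rw [← (hfF ω).tsum_eq, ENNReal.ofReal_tsum_of_nonneg (hf0 · ω) (hfF ω).summable]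
      _ = ENNReal.ofReal (∑' k, ∫ ω, f k ω ∂μ) := by
          rw [ENNReal.ofReal_tsum_of_nonneg (fun k => integral_nonneg (hf0 k)) hsum]
          exact tsum_congr fun k =>
            (ofReal_integral_eq_lintegral_ofReal (hf k) (.of_forall (hf0 k))).symm
  have hFint : Integrable F μ :=
    ⟨hF, (hasFiniteIntegral_iff_ofReal (.of_forall hF0)).2 (hlint ▸ ENNReal.ofReal_lt_top)⟩
  refine ⟨hFint, ?_⟩
  have := hasSum_integral_of_summable_integral_norm hf
    (by simpa only [Real.norm_of_nonneg (hf0 _ _)] using hsum)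
  simpa only [(hfF _).tsum_eq] using this

theorem measurable_sum_range_comap (X : ℕ → Ω → ℝ) (j : ℕ) :
    Measurable[MeasurableSpace.comap (fun ω (i : Fin j) => X i ω) inferInstance]
      fun ω => ∑ i ∈ range j, X i ω := by
  simp_rw [← Fin.sum_univ_eq_sum_range]
  exact (Finset.measurable_sum _ fun i _ => measurable_pi_apply i).comp (comap_measurable _)

end MeasureTheory

namespace ProbabilityTheory

def HasCondBernsteinMoments {Ω : Type*} (m : MeasurableSpace Ω) {mΩ : MeasurableSpace Ω}
    (μ : Measure Ω) (Z : Ω → ℝ) (σ b : ℝ) : Prop :=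
  ∀ k : ℕ, 2 ≤ k → ∀ᵐ ω ∂μ, μ[fun ω => |Z ω| ^ k | m] ω ≤ k ! / 2 * σ ^ 2 * b ^ (k - 2)

namespace HasCondBernsteinMoments

variable {Ω : Type*} {m mΩ : MeasurableSpace Ω} {μ : Measure Ω} {Z : Ω → ℝ} {σ b : ℝ}

theorem of_sq_of_abs_pow (hvar : ∀ᵐ ω ∂μ, μ[fun ω => Z ω ^ 2 | m] ω ≤ σ ^ 2)
    (hmom : ∀ k : ℕ, 3 ≤ k → ∀ᵐ ω ∂μ, μ[fun ω => |Z ω| ^ k | m] ω ≤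
      1 / 2 * k ! * σ ^ 2 * b ^ (k - 2)) :
    HasCondBernsteinMoments m μ Z σ b := by
  intro k hk
  rcases hk.eq_or_lt with rfl | hk
  · simpa only [sq_abs, Nat.factorial_two, Nat.sub_self, pow_zero] using
      hvar.mono fun ω h => by norm_num [h]
  · filter_upwards [hmom k hk] with ω h
    linarith

theorem neg (hZ : HasCondBernsteinMoments m μ Z σ b) :
    HasCondBernsteinMoments m μ (fun ω => -Z ω) σ b := by
  simpa only [HasCondBernsteinMoments, abs_neg] using hZ

variable [IsFiniteMeasure μ] {l : ℝ} {s : Set Ω}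

theorem setIntegral_exp_abs_sub_le (hZ : HasCondBernsteinMoments m μ Z σ b) (hm : m ≤ mΩ)
    (hZm : Measurable Z) (hint : ∀ k : ℕ, Integrable (fun ω => |Z ω| ^ k) μ)
    (hl : 0 ≤ l) (hb : 0 ≤ b) (hlb : l * b < 1) (hs : MeasurableSet[m] s) :
    IntegrableOn (fun ω => rexp (l * |Z ω|) - 1 - l * |Z ω|) s μ ∧
      ∫ ω in s, (rexp (l * |Z ω|) - 1 - l * |Z ω|) ∂μ ≤
        l ^ 2 * σ ^ 2 / (2 * (1 - l * b)) * μ.real s := by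
  set f : ℕ → Ω → ℝ := fun k ω => l ^ (k + 2) / (k + 2)! * |Z ω| ^ (k + 2)
  set A := l ^ 2 * σ ^ 2 / 2 * μ.real s
  have hf0 : ∀ k ω, 0 ≤ f k ω := fun k ω => by positivity
  have hfint : ∀ k, IntegrableOn (f k) s μ := fun k => ((hint (k + 2)).const_mul _).integrableOn
  have hfG : ∀ ω, HasSum (f · ω) (rexp (l * |Z ω|) - 1 - l * |Z ω|) := fun ω => by
    convert hasSum_exp_sub_one_sub (l * |Z ω|) using 2 with k
    rw [mul_pow]; ring
  have hfA : ∀ k, ∫ ω in s, f k ω ∂μ ≤ A * (l * b) ^ k := fun k => by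
    rw [integral_const_mul]
    calc l ^ (k + 2) / (k + 2)! * ∫ ω in s, |Z ω| ^ (k + 2) ∂μ
        ≤ l ^ (k + 2) / (k + 2)! * ((k + 2)! / 2 * σ ^ 2 * b ^ k * μ.real s) := by
          gcongr
          exact setIntegral_le_of_condExp_le hm (hint _) (hZ (k + 2) (by omega)) hs
      _ = A * (l * b) ^ k := by
          simp only [A]; field_simp; ring
  have hgeom : HasSum (fun k => A * (l * b) ^ k) (A * (1 - l * b)⁻¹) :=
    (hasSum_geometric_of_lt_one (by positivity) hlb).mul_left A
  obtain ⟨hGint, hGsum⟩ := integrable_of_hasSum_of_nonneg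
    (by fun_prop) hfint hf0 hfG
    (hgeom.summable.of_nonneg_of_le (fun k => integral_nonneg (hf0 k)) hfA)
  refine ⟨hGint, (hasSum_le hfA hGsum hgeom).trans_eq ?_⟩
  simp only [A]; field_simp

theorem setLIntegral_exp_le (hZ : HasCondBernsteinMoments m μ Z σ b) (hm : m ≤ mΩ)
    (hZm : Measurable Z) (hint : ∀ k : ℕ, Integrable (fun ω => |Z ω| ^ k) μ)
    (hcent : μ[Z|m] =ᵐ[μ] 0) (hl : 0 ≤ l) (hb : 0 ≤ b) (hlb : l * b < 1)
    (hs : MeasurableSet[m] s) :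
    ∫⁻ ω in s, ENNReal.ofReal (rexp (l * Z ω)) ∂μ ≤
      ENNReal.ofReal (rexp (l ^ 2 * σ ^ 2 / (2 * (1 - l * b)))) * μ s := by
  set C := l ^ 2 * σ ^ 2 / (2 * (1 - l * b))
  set H : Ω → ℝ := fun ω => 1 + l * Z ω + (rexp (l * |Z ω|) - 1 - l * |Z ω|)
  obtain ⟨hGint, hG⟩ := hZ.setIntegral_exp_abs_sub_le hm hZm hint hl hb hlb hs
  have hZint : Integrable Z μ :=
    (hint 1).mono' hZm.aestronglyMeasurable (.of_forall fun ω => by simp)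
  have hZs : ∫ ω in s, Z ω ∂μ = 0 := by
    rw [← setIntegral_condExp hm hZint hs, integral_congr_ae (ae_restrict_of_ae hcent)]
    exact integral_zero _ _
  have hexpH : ∀ ω, rexp (l * Z ω) ≤ H ω := fun ω => by
    simpa only [H, abs_mul, abs_of_nonneg hl] using exp_le_one_add_add_exp_abs_sub (l * Z ω)
  have hlinint : IntegrableOn (fun ω => 1 + l * Z ω) s μ :=
    ((integrable_const 1).add (hZint.const_mul l)).integrableOn
  have hHint : IntegrableOn H s μ := hlinint.add hGint
  have hHs : ∫ ω in s, H ω ∂μ ≤ rexp C * μ.real s := by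
    calc ∫ ω in s, H ω ∂μ = μ.real s + l * ∫ ω in s, Z ω ∂μ +
          ∫ ω in s, (rexp (l * |Z ω|) - 1 - l * |Z ω|) ∂μ := by
          rw [integral_add hlinint hGint,
            integral_add (integrable_const 1) (hZint.integrableOn.const_mul l), integral_const_mul,
            setIntegral_const, smul_eq_mul, mul_one]
      _ ≤ (1 + C) * μ.real s := by rw [hZs]; linarith
      _ ≤ rexp C * μ.real s := by gcongr; linarith [add_one_le_exp C]
  calc ∫⁻ ω in s, ENNReal.ofReal (rexp (l * Z ω)) ∂μ
      ≤ ∫⁻ ω in s, ENNReal.ofReal (H ω) ∂μ :=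
        lintegral_mono fun ω => ENNReal.ofReal_le_ofReal (hexpH ω)
    _ = ENNReal.ofReal (∫ ω in s, H ω ∂μ) :=
        (ofReal_integral_eq_lintegral_ofReal hHint
          (.of_forall fun ω => (exp_pos _).le.trans (hexpH ω))).symm
    _ ≤ ENNReal.ofReal (rexp C) * μ s := by
        rw [← ofReal_measureReal (measure_ne_top μ s), ← ENNReal.ofReal_mul (exp_pos C).le]
        exact ENNReal.ofReal_le_ofReal hHs

end HasCondBernsteinMoments

variable {Ω : Type*} {mΩ : MeasurableSpace Ω} {μ : Measure Ω}

theorem lintegral_exp_mul_sum_le {n : ℕ} {X : ℕ → Ω → ℝ} {past : ℕ → MeasurableSpace Ω}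
    (hle : ∀ j, past j ≤ mΩ) (hS : ∀ j, Measurable[past j] fun ω => ∑ i ∈ range j, X i ω)
    (hX : ∀ j < n, Measurable (X j)) {l : ℝ} {c : ℝ≥0∞}
    (hstep : ∀ j < n, ∀ s, MeasurableSet[past j] s →
      ∫⁻ ω in s, ENNReal.ofReal (rexp (l * X j ω)) ∂μ ≤ c * μ s) :
    ∫⁻ ω, ENNReal.ofReal (rexp (l * ∑ j ∈ range n, X j ω)) ∂μ ≤ c ^ n * μ Set.univ := by
  induction n with
  | zero => simp
  | succ n ih =>
    have hY : Measurable[past n] fun ω => ENNReal.ofReal (rexp (l * ∑ i ∈ range n, X i ω)) :=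
      ((hS n).const_mul l).exp.ennreal_ofReal
    calc ∫⁻ ω, ENNReal.ofReal (rexp (l * ∑ j ∈ range (n + 1), X j ω)) ∂μ
        = ∫⁻ ω, ENNReal.ofReal (rexp (l * ∑ j ∈ range n, X j ω)) *
            ENNReal.ofReal (rexp (l * X n ω)) ∂μ := by
          simp_rw [sum_range_succ, mul_add, exp_add, ENNReal.ofReal_mul (exp_pos _).le]
      _ ≤ c * ∫⁻ ω, ENNReal.ofReal (rexp (l * ∑ j ∈ range n, X j ω)) ∂μ :=
          lintegral_mul_le_of_forall_setLIntegral_le (hle n) hY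
            ((hX n n.lt_succ_self).const_mul l).exp.ennreal_ofReal (hstep n n.lt_succ_self)
      _ ≤ c * (c ^ n * μ Set.univ) := by
          gcongr
          exact ih (fun j hj => hX j (by omega)) (fun j hj => hstep j (by omega))
      _ = c ^ (n + 1) * μ Set.univ := by ring

theorem measure_ge_le_exp_mul_lintegral_exp {S : Ω → ℝ} (hS : AEMeasurable S μ) {l : ℝ}
    (hl : 0 ≤ l) (t : ℝ) :
    μ {ω | t ≤ S ω} ≤
      ENNReal.ofReal (rexp (-(l * t))) * ∫⁻ ω, ENNReal.ofReal (rexp (l * S ω)) ∂μ := by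
  calc μ {ω | t ≤ S ω}
      ≤ μ {ω | ENNReal.ofReal (rexp (l * t)) ≤ ENNReal.ofReal (rexp (l * S ω))} :=
        measure_mono fun ω h => ENNReal.ofReal_le_ofReal (exp_le_exp.2 (by gcongr; exact h))
    _ ≤ (∫⁻ ω, ENNReal.ofReal (rexp (l * S ω)) ∂μ) / ENNReal.ofReal (rexp (l * t)) :=
        meas_ge_le_lintegral_div ((hS.const_mul l).exp.ennreal_ofReal)
          (ENNReal.ofReal_pos.2 (exp_pos _)).ne' ENNReal.ofReal_ne_top
    _ = _ := by
        rw [div_eq_mul_inv, mul_comm, ← ENNReal.ofReal_inv_of_pos (exp_pos _), exp_neg]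

variable [IsProbabilityMeasure μ] {n : ℕ} {X : ℕ → Ω → ℝ} {past : ℕ → MeasurableSpace Ω}
  {σ b t : ℝ}

theorem measure_sum_ge_le_of_hasCondBernsteinMoments (hle : ∀ j, past j ≤ mΩ)
    (hS : ∀ j, Measurable[past j] fun ω => ∑ i ∈ range j, X i ω) (hX : ∀ j < n, Measurable (X j))
    (hint : ∀ j < n, ∀ k : ℕ, Integrable (fun ω => |X j ω| ^ k) μ) (hσ : σ ≠ 0) (hb : 0 < b)
    (hcent : ∀ j < n, μ[X j | past j] =ᵐ[μ] 0)
    (hB : ∀ j < n, HasCondBernsteinMoments (past j) μ (X j) σ b) (ht : 0 < t) :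
    μ {ω | t ≤ ∑ j ∈ range n, X j ω} ≤
      ENNReal.ofReal (rexp (-t ^ 2 / (2 * (n * σ ^ 2 + b * t)))) := by
  rcases n.eq_zero_or_pos with rfl | hn
  · simp [ht.not_ge]
  have hnσ : 0 < (n : ℝ) * σ ^ 2 := by positivity
  set D := (n : ℝ) * σ ^ 2 + b * t
  have hD : 0 < D := by positivity
  set l := t / D
  have hl : 0 ≤ l := by positivity
  have hlb : 1 - l * b = n * σ ^ 2 / D := by simp only [l, D]; field_simp; ring
  have hlb' : l * b < 1 := by linarith [div_pos hnσ hD]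
  have hSn : AEMeasurable (fun ω => ∑ j ∈ range n, X j ω) μ :=
    (Finset.measurable_sum _ fun j hj => hX j (mem_range.1 hj)).aemeasurable
  calc μ {ω | t ≤ ∑ j ∈ range n, X j ω}
      ≤ ENNReal.ofReal (rexp (-(l * t))) *
          ∫⁻ ω, ENNReal.ofReal (rexp (l * ∑ j ∈ range n, X j ω)) ∂μ :=
        measure_ge_le_exp_mul_lintegral_exp hSn hl t
    _ ≤ ENNReal.ofReal (rexp (-(l * t))) *
          (ENNReal.ofReal (rexp (l ^ 2 * σ ^ 2 / (2 * (1 - l * b)))) ^ n * μ Set.univ) := by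
        gcongr
        exact lintegral_exp_mul_sum_le hle hS hX fun j hj s hs =>
          (hB j hj).setLIntegral_exp_le (hle j) (hX j hj) (hint j hj) (hcent j hj) hl hb.le hlb' hs
    _ = ENNReal.ofReal (rexp (-t ^ 2 / (2 * D))) := by
        rw [measure_univ, mul_one, ← ENNReal.ofReal_pow (exp_pos _).le, ← exp_nat_mul,
          ← ENNReal.ofReal_mul (exp_pos _).le, ← exp_add, hlb]
        congr 2
        simp only [l]
        field_simp
        ring

theorem measure_abs_sum_ge_le_of_hasCondBernsteinMoments (hle : ∀ j, past j ≤ mΩ)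
    (hS : ∀ j, Measurable[past j] fun ω => ∑ i ∈ range j, X i ω) (hX : ∀ j < n, Measurable (X j))
    (hint : ∀ j < n, ∀ k : ℕ, Integrable (fun ω => |X j ω| ^ k) μ) (hσ : σ ≠ 0) (hb : 0 < b)
    (hcent : ∀ j < n, μ[X j | past j] =ᵐ[μ] 0)
    (hB : ∀ j < n, HasCondBernsteinMoments (past j) μ (X j) σ b) (ht : 0 < t) :
    μ {ω | t ≤ |∑ j ∈ range n, X j ω|} ≤
      ENNReal.ofReal (2 * rexp (-t ^ 2 / (2 * (n * σ ^ 2 + b * t)))) := by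
  have hupper := measure_sum_ge_le_of_hasCondBernsteinMoments hle hS hX hint hσ hb hcent hB ht
  have hlower := measure_sum_ge_le_of_hasCondBernsteinMoments (X := fun j ω => -X j ω) hle
    (fun j => by simp only [sum_neg_distrib]; exact (hS j).neg) (fun j hj => (hX j hj).neg)
    (fun j hj => by simpa only [abs_neg] using hint j hj) hσ hb
    (fun j hj => (condExp_neg (X j) (past j)).trans ((hcent j hj).neg.trans (by simp)))
    (fun j hj => (hB j hj).neg) ht
  calc μ {ω | t ≤ |∑ j ∈ range n, X j ω|}
      ≤ μ ({ω | t ≤ ∑ j ∈ range n, X j ω} ∪ {ω | t ≤ ∑ j ∈ range n, -X j ω}) :=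
        measure_mono fun ω (hω : t ≤ |_|) => by
          rcases le_abs.1 hω with h | h
          exacts [Or.inl h, Or.inr (by simpa [sum_neg_distrib] using h)]
    _ ≤ _ := (measure_union_le _ _).trans (add_le_add hupper hlower)
    _ = _ := by rw [← ENNReal.ofReal_add (exp_pos _).le (exp_pos _).le, ← two_mul]

end ProbabilityTheory

/-- Bernstein's inequality for martingale difference sequences (two-sided,
simplified version of Theorem 1.2A in de la Peña 1999). If
`E[X_j | X₁,…,X_{j−1}] = 0`, `E[X_j² | X₁,…,X_{j−1}] ≤ σ²` and
`E[|X_j|^k | X₁,…,X_{j−1}] ≤ (1/2)k!σ²b^{k−2}` for all `k ≥ 3`, then for all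
`t > 0`, `P(|∑_{j<n} X_j| ≥ t) ≤ 2exp(−t²/(2(nσ² + bt)))`. -/
theorem martingale_bernstein_inequality
    {Ω : Type*} [m0 : MeasurableSpace Ω] (μ : Measure Ω) [IsProbabilityMeasure μ]
    (n : ℕ) (X : ℕ → Ω → ℝ)
    (hmeas : ∀ j, Measurable (X j))
    (hint : ∀ j k : ℕ, Integrable (fun ω => |X j ω| ^ k) μ)
    (past : ℕ → MeasurableSpace Ω)
    (hpast : ∀ j, past j =
      MeasurableSpace.comap (fun ω (i : Fin j) => X i ω) inferInstance)
    (σ b : ℝ) (hσ : 0 < σ) (hb : 0 < b)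
    (hcentered : ∀ j < n, μ[X j | past j] =ᵐ[μ] 0)
    (hvar : ∀ j < n, ∀ᵐ ω ∂μ, (μ[fun ω' => (X j ω') ^ 2 | past j]) ω ≤ σ ^ 2)
    (hmom : ∀ j < n, ∀ k : ℕ, 3 ≤ k →
      ∀ᵐ ω ∂μ, (μ[fun ω' => |X j ω'| ^ k | past j]) ω ≤
        (1 / 2) * (Nat.factorial k) * σ ^ 2 * b ^ (k - 2)) :
    ∀ t : ℝ, 0 < t →
      μ {ω | |∑ j ∈ Finset.range n, X j ω| ≥ t} ≤
        ENNReal.ofReal (2 * rexp (-t ^ 2 / (2 * ((n : ℝ) * σ ^ 2 + b * t)))) := by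
  intro t ht
  have hle : ∀ j, past j ≤ m0 := fun j =>
    hpast j ▸ (measurable_pi_lambda (fun ω (i : Fin j) => X i ω) fun i => hmeas i).comap_le
  have hS : ∀ j, Measurable[past j] fun ω => ∑ i ∈ range j, X i ω := fun j =>
    hpast j ▸ measurable_sum_range_comap X j
  exact ProbabilityTheory.measure_abs_sum_ge_le_of_hasCondBernsteinMoments hle hS
    (fun j _ => hmeas j) (fun j _ => hint j) hσ.ne' hb hcentered
    (fun j hj => .of_sq_of_abs_pow (hvar j hj) (hmom j hj)) ht
end
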